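/- arXiv:1912.07859 — 3 statements merged into one kernel-verified Lean document; each statement's English description precedes it below -/
import Mathlib

section
/- If C ⊆ V is a minimal Φ_c-valid control set (i.e., C is Φ_c-valid and no proper subset of C is Φ_c-valid), then every vertex i ∈ C satisfies n_{i,1}(1_C) < n_{i,0}(1_C); that is, the configuration 1_C is absorbing for the down-flip dynamics. -/
open Finset

variable {V : Type*}

/-- Agreement of a configuration on an (unordered) edge. -/
def agreeFun (x : V → Bool) : Sym2 V → Bool :=
  Sym2.lift ⟨fun a b => x a == x b, fun a b => by show (x a == x b) = (x b == x a); cases x a <;> cases x b <;> rfl⟩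

/-- The potential of the majority game: number of edges whose endpoints agree. -/
def Phi [Fintype V] [DecidableEq V] (G : SimpleGraph V) [DecidableRel G.Adj]
    (x : V → Bool) : ℕ :=
  (G.edgeFinset.filter (fun e => agreeFun x e = true)).card

/-- Number of neighbors of `i` playing action `a` in configuration `x`. -/
def nCount [Fintype V] (G : SimpleGraph V) [DecidableRel G.Adj]
    (x : V → Bool) (i : V) (a : Bool) : ℕ :=
  ((G.neighborFinset i).filter (fun j => x j = a)).card

/-- Majority-game utility: number of neighbors agreeing with `i`. -/
def lamC [Fintype V] (G : SimpleGraph V) [DecidableRel G.Adj]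
    (x : V → Bool) (i : V) : ℕ :=
  ((G.neighborFinset i).filter (fun j => x j = x i)).card

/-- Minority-game utility: number of neighbors disagreeing with `i`. -/
def lamA [Fintype V] (G : SimpleGraph V) [DecidableRel G.Adj]
    (x : V → Bool) (i : V) : ℕ :=
  ((G.neighborFinset i).filter (fun j => x j ≠ x i)).card

/-- `x` is a Nash equilibrium of the minority game. -/
def MinorityNE [Fintype V] [DecidableEq V] (G : SimpleGraph V) [DecidableRel G.Adj]
    (x : V → Bool) : Prop :=
  ∀ (i : V) (a : Bool), lamA G (Function.update x i a) i ≤ lamA G x i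

/-- A monotone crusade from `C`: starts at the indicator of `C`, ends at all-ones,
and at each step one coordinate outside `C` is flipped from `0` to `1`. -/
def IsCrusade [DecidableEq V] (C : Finset V) (m : ℕ) (xs : ℕ → V → Bool) : Prop :=
  xs 0 = (fun v => decide (v ∈ C)) ∧ xs m = (fun _ => true) ∧
    ∀ k < m, ∃ i, i ∉ C ∧ xs k i = false ∧ xs (k + 1) = Function.update (xs k) i true

/-- `C` is a `Φ_c`-valid control set: there is a `Φ_c`-adapted monotone crusade from `C`. -/
def ValidControlSet [Fintype V] [DecidableEq V] (G : SimpleGraph V) [DecidableRel G.Adj]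
    (C : Finset V) : Prop :=
  ∃ m xs, IsCrusade C m xs ∧ ∀ k < m, Phi G (xs k) ≤ Phi G (xs (k + 1))

/-- `x ∈ Z`: reachable from the all-ones configuration by allowed down-flips. -/
def InZ [Fintype V] [DecidableEq V] (G : SimpleGraph V) [DecidableRel G.Adj]
    (x : V → Bool) : Prop :=
  ∃ m, ∃ ys : ℕ → V → Bool, ys 0 = (fun _ => true) ∧ ys m = x ∧
    ∀ k < m, ∃ i, ys k i = true ∧ nCount G (ys k) i false ≤ nCount G (ys k) i true ∧
      ys (k + 1) = Function.update (ys k) i false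

/-- `‖x‖₁`: number of coordinates equal to `1`. -/
def norm1 [Fintype V] (x : V → Bool) : ℕ :=
  (Finset.univ.filter (fun v => x v = true)).card

/-! Flipping a vertex `i` changes the potential only on the edges at `i`, so `Φ_c` increases under
an up-flip of `i` exactly when `i` has at least as many neighbours at `1` as at `0`. If some
`i ∈ C` had `n_{i,1}(1_C) ≥ n_{i,0}(1_C)`, prepending the flip `1_{C ∖ {i}} → 1_C` to an adapted
crusade from `C` would give one from `C ∖ {i}`, contradicting minimality. -/

theorem agreeFun_update_of_not_mem [DecidableEq V] (x : V → Bool) {i : V} (a : Bool) {e : Sym2 V}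
    (he : i ∉ e) : agreeFun (Function.update x i a) e = agreeFun x e := by
  induction e using Sym2.ind with
  | _ u v =>
    simp only [Sym2.mem_iff, not_or] at he
    simp [agreeFun, Function.update_of_ne (Ne.symm he.1), Function.update_of_ne (Ne.symm he.2)]

section Potential

variable [Fintype V] [DecidableEq V] (G : SimpleGraph V) [DecidableRel G.Adj]

theorem nCount_update_self (x : V → Bool) (i : V) (a b : Bool) :
    nCount G (Function.update x i a) i b = nCount G x i b := by
  refine congrArg card (filter_congr fun j hj => ?_)
  rw [Function.update_of_ne ((G.mem_neighborFinset i j).mp hj).ne']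

theorem card_agreeing_edges_mem_eq_nCount (x : V → Bool) (i : V) :
    #{e ∈ G.edgeFinset | agreeFun x e = true ∧ i ∈ e} = nCount G x i (x i) := by
  symm
  refine card_nbij (fun j => s(i, j)) (fun j hj => ?_) (fun j _ k _ h => Sym2.congr_right.mp h)
    (fun e he => ?_)
  · rw [mem_coe, mem_filter, SimpleGraph.mem_neighborFinset] at hj
    rw [mem_coe, mem_filter, SimpleGraph.mem_edgeFinset]
    exact ⟨hj.1, by simp [agreeFun, hj.2], Sym2.mem_mk_left i j⟩
  · rw [mem_coe, mem_filter, SimpleGraph.mem_edgeFinset] at he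
    obtain ⟨he, hagree, hie⟩ := he
    obtain ⟨j, rfl⟩ := Sym2.mem_iff_exists.mp hie
    simp only [agreeFun, Sym2.lift_mk, beq_iff_eq] at hagree
    exact ⟨j, by simpa [hagree] using he, rfl⟩

theorem Phi_eq_card_add_nCount (x : V → Bool) (i : V) :
    Phi G x = #{e ∈ G.edgeFinset | agreeFun x e = true ∧ i ∉ e} + nCount G x i (x i) := by
  rw [Phi, ← card_agreeing_edges_mem_eq_nCount, ← filter_filter, ← filter_filter,
    add_comm, card_filter_add_card_filter_not]

theorem Phi_update_add_nCount (x : V → Bool) (i : V) (a : Bool) :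
    Phi G (Function.update x i a) + nCount G x i (x i) = Phi G x + nCount G x i a := by
  have hfar : #{e ∈ G.edgeFinset | agreeFun (Function.update x i a) e = true ∧ i ∉ e}
      = #{e ∈ G.edgeFinset | agreeFun x e = true ∧ i ∉ e} := by
    refine congrArg card (filter_congr fun e _ => and_congr_left fun hie => ?_)
    rw [agreeFun_update_of_not_mem x a hie]
  rw [Phi_eq_card_add_nCount G (Function.update x i a) i, Phi_eq_card_add_nCount G x i, hfar,
    Function.update_self, nCount_update_self]
  ring

theorem Phi_le_Phi_update_true {x : V → Bool} {i : V} (hxi : x i = false)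
    (h : nCount G x i false ≤ nCount G x i true) :
    Phi G x ≤ Phi G (Function.update x i true) := by
  have := Phi_update_add_nCount G x i true
  rw [hxi] at this
  omega

end Potential

theorem update_indicator_erase [DecidableEq V] {C : Finset V} {i : V} (hi : i ∈ C) :
    Function.update (fun v => decide (v ∈ C.erase i)) i true = fun v => decide (v ∈ C) := by
  funext v
  by_cases hv : v = i
  · simp [hv, hi]
  · simp [hv]

theorem IsCrusade.erase [DecidableEq V] {C : Finset V} {m : ℕ} {xs : ℕ → V → Bool}
    (hxs : IsCrusade C m xs) {i : V} (hi : i ∈ C) :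
    IsCrusade (C.erase i) (m + 1)
      (fun k => if k = 0 then fun v => decide (v ∈ C.erase i) else xs (k - 1)) := by
  obtain ⟨h0, hm, hstep⟩ := hxs
  refine ⟨rfl, by simpa using hm, fun k hk => ?_⟩
  cases k with
  | zero =>
    refine ⟨i, by simp, by simp, ?_⟩
    show xs 0 = Function.update (fun v => decide (v ∈ C.erase i)) i true
    rw [update_indicator_erase hi, h0]
  | succ k =>
    obtain ⟨j, hjC, hj, hnext⟩ := hstep k (by omega)
    exact ⟨j, fun hjD => hjC (mem_of_mem_erase hjD), by simpa using hj, by simpa using hnext⟩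

theorem ValidControlSet.erase [Fintype V] [DecidableEq V] {G : SimpleGraph V}
    [DecidableRel G.Adj] {C : Finset V} (hC : ValidControlSet G C) {i : V} (hi : i ∈ C)
    (h : nCount G (fun v => decide (v ∈ C)) i false ≤ nCount G (fun v => decide (v ∈ C)) i true) :
    ValidControlSet G (C.erase i) := by
  obtain ⟨m, xs, hxs, hPhi⟩ := hC
  refine ⟨m + 1, _, hxs.erase hi, fun k hk => ?_⟩
  cases k with
  | zero =>
    rw [← update_indicator_erase hi, nCount_update_self, nCount_update_self] at h
    show Phi G _ ≤ Phi G (xs 0)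
    rw [hxs.1, ← update_indicator_erase hi]
    exact Phi_le_Phi_update_true G (by simp) h
  | succ k => simpa using hPhi k (by omega)

/-- if `C` is a minimal `Φ_c`-valid control set, then `1_C` is absorbing for
the down-flip dynamics: every `i ∈ C` has `n_{i,1}(1_C) < n_{i,0}(1_C)`. -/
theorem minimal_validControlSet_absorbing [Fintype V] [DecidableEq V]
    (G : SimpleGraph V) [DecidableRel G.Adj] (C : Finset V)
    (hC : ValidControlSet G C) (hmin : ∀ D ⊂ C, ¬ ValidControlSet G D) :
    ∀ i ∈ C, nCount G (fun v => decide (v ∈ C)) i true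
                < nCount G (fun v => decide (v ∈ C)) i false := by
  intro i hi
  by_contra h
  exact hmin _ (erase_ssubset hi) (hC.erase hi (not_lt.mp h))
end

section
/- For every finite simple undirected graph G on n vertices, there exists a Φ_c-valid control set C ⊆ V with |C| ≤ n/2. -/
open Finset

variable {V : Type*}

lemma agree_update_notMem [DecidableEq V] (y : V → Bool) (i : V) (a : Bool) (e : Sym2 V) (h : i ∉ e) :
    agreeFun (Function.update y i a) e = agreeFun y e := by
  induction e using Sym2.ind with
  | _ u v =>
    simp only [Sym2.mem_iff, not_or] at h
    show (Function.update y i a u == _) = (y u == y v)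
    rw [Function.update_of_ne (fun hh => h.1 hh.symm), Function.update_of_ne (fun hh => h.2 hh.symm)]

lemma card_incident [Fintype V] [DecidableEq V] (G : SimpleGraph V) [DecidableRel G.Adj]
    (y : V → Bool) (i : V) :
    (G.edgeFinset.filter (fun e => agreeFun y e = true ∧ i ∈ e)).card = nCount G y i (y i) := by
  rw [nCount]
  apply Finset.card_bij (fun e he => Sym2.Mem.other ((Finset.mem_filter.mp he).2.2 : i ∈ e))
  · intro e he
    obtain ⟨hE, hag, hmem⟩ := Finset.mem_filter.mp he
    have hother := Sym2.other_mem hmem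
    have heq : e = s(i, Sym2.Mem.other hmem) := (Sym2.other_spec hmem).symm
    rw [Finset.mem_filter, SimpleGraph.mem_neighborFinset]
    constructor
    · rw [← SimpleGraph.mem_edgeSet, ← heq]; exact SimpleGraph.mem_edgeFinset.mp hE
    · have : agreeFun y s(i, Sym2.Mem.other hmem) = true := by rw [← heq]; exact hag
      exact (eq_of_beq this).symm
  · intro e1 h1 e2 h2 heq
    have s1 := Sym2.other_spec (Finset.mem_filter.mp h1).2.2
    have s2 := Sym2.other_spec (Finset.mem_filter.mp h2).2.2
    rw [← s1, ← s2, heq]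
  · intro j hj
    rw [Finset.mem_filter, SimpleGraph.mem_neighborFinset] at hj
    refine ⟨s(i,j), Finset.mem_filter.mpr ⟨SimpleGraph.mem_edgeFinset.mpr hj.1, ?_, Sym2.mem_mk_left i j⟩, ?_⟩
    · show (y i == y j) = true
      rw [hj.2]; exact beq_self_eq_true _
    · have hm : i ∈ s(i,j) := Sym2.mem_mk_left i j
      have := Sym2.other_spec hm
      exact Sym2.congr_right.mp this

lemma phi_split [Fintype V] [DecidableEq V] (G : SimpleGraph V) [DecidableRel G.Adj]
    (y : V → Bool) (i : V) :
    Phi G y = (G.edgeFinset.filter (fun e => agreeFun y e = true ∧ i ∉ e)).card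
      + nCount G y i (y i) := by
  rw [← card_incident G y i, Phi]
  have h := Finset.card_filter_add_card_filter_not
    (s := G.edgeFinset.filter (fun e => agreeFun y e = true)) (p := fun e => i ∈ e)
  rw [Finset.filter_filter, Finset.filter_filter] at h
  omega

lemma nCount_update [Fintype V] [DecidableEq V] (G : SimpleGraph V) [DecidableRel G.Adj]
    (y : V → Bool) (i : V) (a b : Bool) :
    nCount G (Function.update y i a) i b = nCount G y i b := by
  unfold nCount
  congr 1
  apply Finset.filter_congr
  intro j hj
  rw [SimpleGraph.mem_neighborFinset] at hj
  rw [Function.update_of_ne (G.ne_of_adj hj).symm]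

lemma phi_update_eq [Fintype V] [DecidableEq V] (G : SimpleGraph V) [DecidableRel G.Adj]
    (y : V → Bool) (i : V) (a : Bool) :
    Phi G (Function.update y i a)
      = (G.edgeFinset.filter (fun e => agreeFun y e = true ∧ i ∉ e)).card + nCount G y i a := by
  rw [phi_split G _ i, Function.update_self, nCount_update]
  congr 2
  apply Finset.filter_congr
  intro e _
  constructor
  · rintro ⟨h1, h2⟩; exact ⟨by rwa [agree_update_notMem y i a e h2] at h1, h2⟩
  · rintro ⟨h1, h2⟩; exact ⟨by rwa [agree_update_notMem y i a e h2], h2⟩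

lemma phi_le_update [Fintype V] [DecidableEq V] (G : SimpleGraph V) [DecidableRel G.Adj]
    (y : V → Bool) (i : V) (a : Bool) (hc : nCount G y i (y i) ≤ nCount G y i a) :
    Phi G y ≤ Phi G (Function.update y i a) := by
  rw [phi_split G y i, phi_update_eq]; omega

lemma minimizer_local [Fintype V] [DecidableEq V] (G : SimpleGraph V) [DecidableRel G.Adj]
    (x : V → Bool) (hx : ∀ z : V → Bool, Phi G x ≤ Phi G z) (i : V) :
    nCount G x i (x i) ≤ nCount G x i (!(x i)) := by
  have h := hx (Function.update x i (!(x i)))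
  rw [phi_split G x i, phi_update_eq] at h
  omega

lemma valid_of_local [Fintype V] [DecidableEq V] (G : SimpleGraph V) [DecidableRel G.Adj]
    (x : V → Bool) (b : Bool)
    (hloc : ∀ i, x i = b → nCount G x i b ≤ nCount G x i (!b)) :
    ValidControlSet G (univ.filter (fun v => x v ≠ b)) := by
  classical
  set L := (univ.filter (fun v => x v = b)).toList with hLdef
  have hnod : L.Nodup := Finset.nodup_toList _
  have hmemL : ∀ v, v ∈ L ↔ x v = b := by
    intro v; rw [hLdef, Finset.mem_toList, Finset.mem_filter]; simp
  set xs : ℕ → V → Bool := fun k v => (decide (x v ≠ b) || decide (v ∈ L.take k)) with hxs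
  -- step structure
  have hstep : ∀ k (hk : k < L.length),
      L[k] ∉ (univ.filter (fun v => x v ≠ b)) ∧ xs k L[k] = false ∧
      xs (k+1) = Function.update (xs k) L[k] true := by
    intro k hk
    have hxLk : x L[k] = b := (hmemL _).mp (List.getElem_mem hk)
    have hnot : L[k] ∉ L.take k := by
      intro hm
      rw [List.mem_take_iff_getElem] at hm
      obtain ⟨j, hj, he⟩ := hm
      have := (List.Nodup.getElem_inj_iff hnod).mp he
      omega
    refine ⟨by simp [hxLk], by simp [hxs, hxLk, hnot], ?_⟩
    funext v
    by_cases hv : v = L[k]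
    · subst hv
      rw [Function.update_self]
      simp only [hxs, Bool.or_eq_true, decide_eq_true_eq]
      right
      rw [List.take_succ, List.mem_append, List.getElem?_eq_getElem hk]
      simp
    · rw [Function.update_of_ne hv]
      simp only [hxs]
      congr 1
      apply decide_eq_decide.mpr
      rw [List.take_succ, List.mem_append, List.getElem?_eq_getElem hk]
      simp [hv]
  refine ⟨L.length, xs, ⟨?_, ?_, ?_⟩, ?_⟩
  · funext v
    simp [hxs]
  · funext v
    simp only [hxs, List.take_length, Bool.or_eq_true, decide_eq_true_eq]
    by_cases hv : x v = b
    · exact Or.inr ((hmemL v).mpr hv)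
    · exact Or.inl hv
  · intro k hk
    exact ⟨L[k], hstep k hk⟩
  · intro k hk
    obtain ⟨-, hfalse, hupd⟩ := hstep k hk
    rw [hupd]
    have hxLk : x L[k] = b := (hmemL _).mp (List.getElem_mem hk)
    apply phi_le_update
    rw [hfalse]
    calc nCount G (xs k) L[k] false ≤ nCount G x L[k] b := by
          apply Finset.card_le_card
          intro j hj
          rw [Finset.mem_filter] at *
          refine ⟨hj.1, ?_⟩
          have := hj.2
          simp only [hxs, Bool.or_eq_false_iff, decide_eq_false_iff_not, not_not] at this
          exact this.1
      _ ≤ nCount G x L[k] (!b) := hloc _ hxLk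
      _ ≤ nCount G (xs k) L[k] true := by
          apply Finset.card_le_card
          intro j hj
          rw [Finset.mem_filter] at *
          refine ⟨hj.1, ?_⟩
          have : x j ≠ b := by rw [hj.2]; cases b <;> simp
          simp [hxs, this]

/-- every graph has a `Φ_c`-valid control set of size at most `n/2`. -/
theorem exists_validControlSet_half [Fintype V] [DecidableEq V]
    (G : SimpleGraph V) [DecidableRel G.Adj] :
    ∃ C : Finset V, ValidControlSet G C ∧ 2 * C.card ≤ Fintype.card V := by
  classical
  obtain ⟨x, -, hx⟩ := Finset.exists_min_image (univ : Finset (V → Bool)) (Phi G)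
    ⟨fun _ => true, Finset.mem_univ _⟩
  have key : ∀ b : Bool, ∀ i, x i = b → nCount G x i b ≤ nCount G x i (!b) := by
    intro b i hib
    have := minimizer_local G x (fun z => hx z (Finset.mem_univ z)) i
    rwa [hib] at this
  have hsum := Finset.card_filter_add_card_filter_not
    (s := (univ : Finset V)) (p := fun v => x v = true)
  rw [Finset.card_univ] at hsum
  have he1 : (univ.filter (fun v => x v ≠ true)) = (univ.filter (fun v => ¬ x v = true)) := rfl
  have he2 : (univ.filter (fun v => x v ≠ false)) = (univ.filter (fun v => x v = true)) := by
    apply Finset.filter_congr; intro v _; cases x v <;> simp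
  by_cases hc : (univ.filter (fun v => ¬ x v = true)).card ≤ (univ.filter (fun v => x v = true)).card
  · refine ⟨univ.filter (fun v => x v ≠ true), valid_of_local G x true (key true), ?_⟩
    rw [he1]; omega
  · refine ⟨univ.filter (fun v => x v ≠ false), valid_of_local G x false (key false), ?_⟩
    rw [he2]; omega
end

section
/- Let G be the complete graph on n vertices. Then a subset C ⊆ V is a Φ_c-valid control set if and only if 2|C| ≥ n − 1. -/
open Finset

variable {V : Type*}

/-!
Changing `x i` to `a` only affects the edges at `i`, so `Φ_c` gains the neighbours of `i` playing
`a` and loses those agreeing with the old `x i`. On the complete graph a `0 → 1` flip therefore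
keeps `Φ_c` from decreasing exactly when `n ≤ 2‖x‖₁ + 1`. Along a monotone crusade `‖x‖₁` starts
at `|C|` and never drops below it, so the first step forces `n ≤ 2|C| + 1`, and under this bound
every monotone crusade is adapted.
-/

lemma agreeFun_mk (x : V → Bool) (a b : V) : agreeFun x s(a, b) = (x a == x b) := rfl

section Potential

open SimpleGraph

variable [Fintype V] [DecidableEq V] (G : SimpleGraph V) [DecidableRel G.Adj]

lemma card_filter_agreeFun_and_mem (x : V → Bool) (i : V) :
    #{e ∈ G.edgeFinset | agreeFun x e = true ∧ i ∈ e} = lamC G x i := by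
  symm
  refine card_bij (fun j _ => s(i, j)) ?_ (fun _ _ _ _ h => Sym2.congr_right.mp h) ?_
  · intro j hj
    obtain ⟨hij, hxj⟩ := mem_filter.mp hj
    exact mem_filter.mpr ⟨mem_edgeFinset.mpr ((G.mem_neighborFinset i j).mp hij),
      by simp [agreeFun_mk, hxj], Sym2.mem_mk_left i j⟩
  · intro e he
    obtain ⟨heE, hagree, hie⟩ := mem_filter.mp he
    induction e using Sym2.ind with
    | _ a b =>
      rw [mem_edgeFinset, mem_edgeSet] at heE
      have hab : x a = x b := by simpa [agreeFun_mk] using hagree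
      rcases Sym2.mem_iff.mp hie with rfl | rfl
      · exact ⟨b, by simp [heE, hab], rfl⟩
      · exact ⟨a, by simp [heE.symm, hab], Sym2.eq_swap⟩

lemma Phi_eq_lamC_add (x : V → Bool) (i : V) :
    Phi G x = lamC G x i + #{e ∈ G.edgeFinset | agreeFun x e = true ∧ i ∉ e} := by
  rw [Phi, ← card_filter_agreeFun_and_mem, ← filter_filter, ← filter_filter,
    card_filter_add_card_filter_not]

lemma filter_agreeFun_update_and_notMem (x : V → Bool) (i : V) (a : Bool) :
    {e ∈ G.edgeFinset | agreeFun (Function.update x i a) e = true ∧ i ∉ e}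
      = {e ∈ G.edgeFinset | agreeFun x e = true ∧ i ∉ e} := by
  refine filter_congr fun e _ => ?_
  induction e using Sym2.ind with
  | _ u w =>
    by_cases hu : u = i
    · simp [hu]
    by_cases hw : w = i
    · simp [hw]
    simp [agreeFun_mk, Function.update_of_ne hu, Function.update_of_ne hw, Ne.symm hu, Ne.symm hw]

lemma lamC_update_self (x : V → Bool) (i : V) (a : Bool) :
    lamC G (Function.update x i a) i = nCount G x i a := by
  rw [lamC, nCount, Function.update_self]
  congr 1
  refine filter_congr fun j hj => ?_
  rw [Function.update_of_ne (G.ne_of_adj ((G.mem_neighborFinset i j).mp hj)).symm]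

lemma Phi_update_add_lamC (x : V → Bool) (i : V) (a : Bool) :
    Phi G (Function.update x i a) + lamC G x i = Phi G x + nCount G x i a := by
  rw [Phi_eq_lamC_add G _ i, Phi_eq_lamC_add G x i, filter_agreeFun_update_and_notMem,
    lamC_update_self]
  ring

end Potential

lemma lamC_eq_nCount [Fintype V] (G : SimpleGraph V) [DecidableRel G.Adj] (x : V → Bool) (i : V) :
    lamC G x i = nCount G x i (x i) := rfl

section CompleteGraph

variable [Fintype V] [DecidableRel (⊤ : SimpleGraph V).Adj]

lemma nCount_top_true_add_false (x : V → Bool) (i : V) :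
    nCount ⊤ x i true + nCount ⊤ x i false = Fintype.card V - 1 := by
  have hfalse : ∀ j, x j = false ↔ ¬x j = true := by simp
  simp only [nCount, hfalse]
  rw [card_filter_add_card_filter_not]
  simp

lemma nCount_top_true_of_apply_eq_false {x : V → Bool} {i : V} (hx : x i = false) :
    nCount ⊤ x i true = norm1 x := by
  rw [nCount, norm1]
  congr 1
  ext j
  simp only [mem_filter, SimpleGraph.mem_neighborFinset, SimpleGraph.top_adj, mem_univ, true_and,
    and_iff_right_iff_imp]
  rintro hj rfl
  simp [hx] at hj

lemma Phi_top_le_update_true_iff [DecidableEq V] {x : V → Bool} {i : V} (hx : x i = false) :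
    Phi ⊤ x ≤ Phi ⊤ (Function.update x i true) ↔ Fintype.card V ≤ 2 * norm1 x + 1 := by
  have hflip := Phi_update_add_lamC ⊤ x i true
  have hsum := nCount_top_true_add_false x i
  rw [lamC_eq_nCount, hx] at hflip
  rw [← nCount_top_true_of_apply_eq_false hx]
  omega

end CompleteGraph

section Crusade

variable [DecidableEq V] {C : Finset V} {m : ℕ} {xs : ℕ → V → Bool}

lemma IsCrusade.apply_of_mem (h : IsCrusade C m xs) {k : ℕ} (hk : k ≤ m) {v : V} (hv : v ∈ C) :
    xs k v = true := by
  induction k with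
  | zero => simp [h.1, hv]
  | succ k ih =>
    obtain ⟨i, hiC, -, hstep⟩ := h.2.2 k hk
    rw [hstep, Function.update_of_ne (ne_of_mem_of_not_mem hv hiC), ih (by omega)]

lemma IsCrusade.cons {i : V} (hi : i ∉ C) (h : IsCrusade (insert i C) m xs) :
    IsCrusade C (m + 1) fun
      | 0 => fun v => decide (v ∈ C)
      | k + 1 => xs k := by
  refine ⟨rfl, h.2.1, fun k hk => ?_⟩
  cases k with
  | zero =>
    refine ⟨i, hi, by simp [hi], ?_⟩
    simp only [h.1]
    funext v
    by_cases hv : v = i <;> simp [hv]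
  | succ k =>
    obtain ⟨j, hj, hjk, hstep⟩ := h.2.2 k (by omega)
    exact ⟨j, fun hjC => hj (mem_insert_of_mem hjC), hjk, hstep⟩

lemma exists_isCrusade_of_forall_notMem_mem (s : Finset V) (C : Finset V)
    (hs : ∀ v ∉ C, v ∈ s) : ∃ m xs, IsCrusade C m xs := by
  induction s using Finset.induction_on generalizing C with
  | empty =>
    have hC : ∀ v, v ∈ C := fun v => by_contra fun hv => by simpa using hs v hv
    exact ⟨0, fun _ v => decide (v ∈ C), rfl, by simp [hC], fun k hk => absurd hk (by omega)⟩
  | insert a s _ ih =>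
    by_cases ha : a ∈ C
    · exact ih C fun v hv =>
        (mem_insert.mp (hs v hv)).resolve_left (ne_of_mem_of_not_mem ha hv).symm
    · obtain ⟨m, xs, h⟩ := ih (insert a C) fun v hv => by
        rw [mem_insert, not_or] at hv
        exact (mem_insert.mp (hs v hv.2)).resolve_left hv.1
      exact ⟨_, _, h.cons ha⟩

lemma exists_isCrusade [Fintype V] (C : Finset V) : ∃ m xs, IsCrusade C m xs :=
  exists_isCrusade_of_forall_notMem_mem univ C fun v _ => mem_univ v

end Crusade

section Norm1

variable [Fintype V]

lemma norm1_decide_mem [DecidableEq V] (C : Finset V) : norm1 (fun v => decide (v ∈ C)) = #C := by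
  simp [norm1]

lemma card_le_norm1 {C : Finset V} {x : V → Bool} (h : ∀ v ∈ C, x v = true) : #C ≤ norm1 x :=
  card_le_card fun v hv => mem_filter.mpr ⟨mem_univ v, h v hv⟩

end Norm1

/-- on the complete graph on `n` vertices, `C` is a `Φ_c`-valid control
set iff `2|C| ≥ n − 1`. -/
theorem completeGraph_validControlSet_iff [Fintype V] [DecidableEq V]
    (G : SimpleGraph V) [DecidableRel G.Adj] (hG : G = ⊤) (C : Finset V) :
    ValidControlSet G C ↔ Fintype.card V ≤ 2 * C.card + 1 := by
  subst hG
  constructor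
  · rintro ⟨m, xs, hxs, hadapted⟩
    rcases Nat.eq_zero_or_pos m with rfl | hm
    · have hC : C = univ := eq_univ_of_forall fun v => by
        simpa using congrFun (hxs.1.symm.trans hxs.2.1) v
      rw [hC, card_univ]
      omega
    · obtain ⟨i, -, hi, hstep⟩ := hxs.2.2 0 hm
      have h0 := hadapted 0 hm
      rwa [hstep, Phi_top_le_update_true_iff hi, hxs.1, norm1_decide_mem] at h0
  · intro hC
    obtain ⟨m, xs, hxs⟩ := exists_isCrusade C
    refine ⟨m, xs, hxs, fun k hk => ?_⟩
    obtain ⟨i, -, hi, hstep⟩ := hxs.2.2 k hk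
    rw [hstep, Phi_top_le_update_true_iff hi]
    have := card_le_norm1 (x := xs k) fun v hv => hxs.apply_of_mem hk.le hv
    omega
end
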